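/- Let σ : ℝ → ℝ be rectified and let x_1, ..., x_d ∈ ℝ^p be distinct, y_i ∈ ℝ^ℓ arbitrary vectors. Then there exist parameters of a one-hidden-layer network of width ℓ·d with activation σ (i.e., a ∈ ℝ^p, biases b ∈ ℝ^{ℓd}, and an output matrix M ∈ ℝ^{ℓ×ℓd}) computing f(x) = M σ(x·a·𝟙 − b) with f(x_i) = y_i for all i. -/

import Mathlib

/-!
Choose a direction `a` along which the data points have pairwise distinct projections
`tᵢ = a ⬝ᵥ xᵢ` (it avoids finitely many hyperplanes). With biases `bⱼ = tⱼ - ε`, where `ε` is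
at most the smallest gap between the `tᵢ`, the matrix `σ (tᵢ - bⱼ)` vanishes whenever
`tᵢ < tⱼ` and equals `σ ε > 0` on the diagonal, so it is triangular in the order of the `tᵢ`
and invertible; each output coordinate is then an exact linear solve.
-/

open Function Filter Topology Matrix

theorem exists_injective_dotProduct {K ι n : Type*} [Field K] [Infinite K] [Finite ι]
    [Fintype n] {x : ι → n → K} (hx : Injective x) :
    ∃ a : n → K, Injective fun i => a ⬝ᵥ x i := by
  classical
  have := Fintype.ofFinite ι
  let hyperplane (q : {q : ι × ι // q.1 ≠ q.2}) : Submodule K (n → K) :=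
    LinearMap.ker ((dotProductBilin K K).flip (x q.1.1 - x q.1.2))
  have hproper (q) : hyperplane q ≠ ⊤ := by
    intro htop
    obtain ⟨k, hk⟩ := Function.ne_iff.1 (hx.ne q.2)
    have := htop ▸ Submodule.mem_top (x := Pi.single k 1)
    simp [hyperplane, sub_eq_zero] at this
    exact hk this
  obtain ⟨a, ha⟩ := Set.ne_univ_iff_exists_notMem _ |>.1 <| Set.ssubset_univ_iff.1 <|
    Submodule.iUnion_ssubset_of_forall_ne_top_of_card_lt Finset.univ _ hproper
      (ENat.card_eq_top_of_infinite (α := K) ▸ ENat.natCast_lt_top _)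
  refine ⟨a, fun i j hij => by_contra fun hne => ha ?_⟩
  simp only [Set.mem_iUnion]
  exact ⟨⟨(i, j), hne⟩, Finset.mem_univ _, by simpa [hyperplane, dotProduct_sub, sub_eq_zero]⟩

theorem exists_pos_le_sub_of_lt {ι : Type*} [Finite ι] (t : ι → ℝ) :
    ∃ ε > 0, ∀ i j, t i < t j → ε ≤ t j - t i := by
  have hsmall : ∀ᶠ ε in 𝓝[>] (0 : ℝ), ∀ i j, t i < t j → ε ≤ t j - t i :=
    eventually_all.2 fun i => eventually_all.2 fun j => eventually_imp_distrib_left.2 fun h =>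
      nhdsWithin_le_nhds (eventually_le_nhds (sub_pos.2 h))
  exact (eventually_mem_nhdsWithin.and hsmall).exists

theorem det_activation_ne_zero {ι : Type*} [Fintype ι] [LinearOrder ι] {σ : ℝ → ℝ}
    (hσ0 : ∀ x ≤ 0, σ x = 0) {ε : ℝ} (hσε : σ ε ≠ 0) {t : ι → ℝ}
    (hgap : ∀ i j, i < j → ε ≤ t j - t i) :
    (Matrix.of fun i j => σ (t i - t j + ε)).det ≠ 0 := by
  have hlower : (Matrix.of fun i j => σ (t i - t j + ε)).IsLowerTriangular :=
    fun i j hij => hσ0 _ (by linarith [hgap i j hij])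
  rw [det_of_isLowerTriangular _ hlower]
  exact Finset.prod_ne_zero_iff.2 fun _ _ => by simpa using hσε

theorem exists_sum_mul_activation_eq {ι : Type*} [Fintype ι] {σ : ℝ → ℝ}
    (hσ0 : ∀ x ≤ 0, σ x = 0) (hσne : ∀ x, 0 < x → σ x ≠ 0) {t : ι → ℝ} (ht : Injective t)
    (z : ι → ℝ) : ∃ b c : ι → ℝ, ∀ i, ∑ j, c j * σ (t i - b j) = z i := by
  let : LinearOrder ι := LinearOrder.lift' t ht
  obtain ⟨ε, hε, hgap⟩ := exists_pos_le_sub_of_lt t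
  have hdet := det_activation_ne_zero hσ0 (hσne ε hε) hgap
  obtain ⟨c, hc⟩ := mulVec_surjective_iff_isUnit.2 ((isUnit_iff_isUnit_det _).2 hdet.isUnit) z
  refine ⟨fun j => t j - ε, c, fun i => ?_⟩
  rw [← hc]
  simp only [mulVec, dotProduct, of_apply, mul_comm, sub_sub_eq_add_sub, add_sub_right_comm]

theorem stmt_17_general (d p ℓ : ℕ) (σ : ℝ → ℝ)
    (hσ0 : ∀ x : ℝ, x ≤ 0 → σ x = 0)
    (hσpos : ∀ x : ℝ, 0 < x → 0 < σ x)
    (x : Fin d → (Fin p → ℝ)) (hx : Function.Injective x)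
    (y : Fin d → (Fin ℓ → ℝ)) :
    ∃ (a : Fin p → ℝ) (b : Fin ℓ × Fin d → ℝ)
      (M : Matrix (Fin ℓ) (Fin ℓ × Fin d) ℝ),
      ∀ (i : Fin d) (k : Fin ℓ),
        ∑ u : Fin ℓ × Fin d, M k u * σ (dotProduct a (x i) - b u) = y i k := by
  obtain ⟨a, ha⟩ := exists_injective_dotProduct hx
  choose b c hbc using fun k =>
    exists_sum_mul_activation_eq hσ0 (fun x hx => (hσpos x hx).ne') ha (fun i => y i k)
  refine ⟨a, fun u => b u.1 u.2, of fun k u => if u.1 = k then c k u.2 else 0, fun i k => ?_⟩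
  simp [Fintype.sum_prod_type, ite_mul, hbc]

theorem stmt_17 (d p ℓ : ℕ) (σ : ℝ → ℝ) (hσcont : Continuous σ)
    (hσ0 : ∀ x : ℝ, x ≤ 0 → σ x = 0)
    (hσmono : StrictMonoOn σ (Set.Ioi 0))
    (hσpos : ∀ x : ℝ, 0 < x → 0 < σ x)
    (x : Fin d → (Fin p → ℝ)) (hx : Function.Injective x)
    (y : Fin d → (Fin ℓ → ℝ)) :
    ∃ (a : Fin p → ℝ) (b : Fin ℓ × Fin d → ℝ)
      (M : Matrix (Fin ℓ) (Fin ℓ × Fin d) ℝ),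
      ∀ (i : Fin d) (k : Fin ℓ),
        ∑ u : Fin ℓ × Fin d, M k u * σ (dotProduct a (x i) - b u) = y i k :=
  stmt_17_general d p ℓ σ hσ0 hσpos x hx y
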